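/- Define Ψ_p(s) = ∫_0^∞ |sin(t/√s)/(t/√s)|^s t^{p-1} dt for p ∈ (0,1) and s ≥ 2. Then lim_{s→∞} Ψ_p(s) = 6^{p/2} Γ(p/2)/2, i.e., the limit equals ∫_0^∞ exp(−t^2/6) t^{p-1} dt. -/

import Mathlib

/-!
For `0 < u ≤ 2` one has `1 - u²/6 ≤ sin u / u ≤ exp (-u²/6)`. With `u = t/√s` the `s`-th power
of the sinc factor is therefore squeezed between `(1 - t²/(6s))^s` and `exp (-t²/6)`, which gives
the pointwise limit. For `t > 2√s` the crude bound `|sin u / u| ≤ 1/u ≤ 1/2` gives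
`(√s/t)^s ≤ 2/t²`, so for `s ≥ 2` the integrands are dominated by the integrable function
`(exp (-t²/6) + 𝟙_{t > 1} 2/t²) t^(p-1)` and dominated convergence applies. The limit is a Gamma
value by the substitution `x = t²/6`.
-/

open Real MeasureTheory Filter Set Topology

lemma nonneg_of_deriv_nonneg {f : ℝ → ℝ} (hf : Differentiable ℝ f) (h0 : f 0 = 0)
    (hf' : ∀ x, 0 < x → 0 ≤ deriv f x) {x : ℝ} (hx : 0 ≤ x) : 0 ≤ f x :=
  h0 ▸ monotoneOn_of_deriv_nonneg (convex_Ici 0) hf.continuous.continuousOn hf.differentiableOn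
    (by simpa [interior_Ici] using hf') self_mem_Ici hx hx

lemma cos_le_taylor_four {x : ℝ} (hx : 0 ≤ x) : cos x ≤ 1 - x ^ 2 / 2 + x ^ 4 / 24 := by
  have := nonneg_of_deriv_nonneg (f := fun x ↦ 1 - x ^ 2 / 2 + x ^ 4 / 24 - cos x)
    (by fun_prop) (by simp) (fun y hy ↦ ?_) hx
  · linarith
  · simp (disch := fun_prop) only [deriv_fun_sub, deriv_fun_add, deriv_const', deriv_div_const,
      deriv_fun_pow, deriv_id'', deriv_cos']
    nlinarith [sin_ge_sub_cube hy.le]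

lemma sin_le_taylor_five {x : ℝ} (hx : 0 ≤ x) : sin x ≤ x - x ^ 3 / 6 + x ^ 5 / 120 := by
  have := nonneg_of_deriv_nonneg (f := fun x ↦ x - x ^ 3 / 6 + x ^ 5 / 120 - sin x)
    (by fun_prop) (by simp) (fun y hy ↦ ?_) hx
  · linarith
  · simp (disch := fun_prop) only [deriv_fun_sub, deriv_fun_add, deriv_id'', deriv_div_const,
      deriv_fun_pow, Real.deriv_sin]
    nlinarith [cos_le_taylor_four hy.le]

-- `2 / 9 = 4 / (3! * 3)` is the remainder constant of `Real.exp_bound` at order `3`.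
lemma cubic_le_exp_neg {x : ℝ} (hx₀ : 0 ≤ x) (hx₁ : x ≤ 1) :
    1 - x + x ^ 2 / 2 - 2 / 9 * x ^ 3 ≤ exp (-x) := by
  have h := Real.exp_bound (x := -x) (by rwa [abs_neg, abs_of_nonneg hx₀]) (n := 3) (by norm_num)
  simp only [Finset.sum_range_succ, Finset.sum_range_zero, abs_neg, abs_of_nonneg hx₀] at h
  norm_num [Nat.factorial] at h
  linarith [(abs_le.mp h).1]

lemma sin_le_mul_exp_neg {u : ℝ} (hu₀ : 0 ≤ u) (hu₂ : u ≤ 2) :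
    sin u ≤ u * exp (-(u ^ 2 / 6)) := by
  have hu4 : u ^ 2 ≤ 4 := by nlinarith
  calc sin u ≤ u - u ^ 3 / 6 + u ^ 5 / 120 := sin_le_taylor_five hu₀
    _ ≤ u * (1 - u ^ 2 / 6 + (u ^ 2 / 6) ^ 2 / 2 - 2 / 9 * (u ^ 2 / 6) ^ 3) := by
      nlinarith [mul_le_mul_of_nonneg_left hu4 (pow_nonneg hu₀ 5)]
    _ ≤ u * exp (-(u ^ 2 / 6)) :=
      mul_le_mul_of_nonneg_left (cubic_le_exp_neg (by positivity) (by linarith)) hu₀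

lemma rpow_le_two_mul_sq_div {a s : ℝ} (ha₀ : 0 < a) (ha : a ≤ 1 / 2) (hs : 2 ≤ s) :
    a ^ s ≤ 2 * a ^ 2 / s := by
  have hbern : s ≤ 2 ^ (s - 1) := by
    have := one_add_mul_self_le_rpow_one_add (s := 1) (by norm_num) (p := s - 1) (by linarith)
    norm_num at this
    linarith
  have h2 : (2 : ℝ) ^ (s - 1) = 2 * 2 ^ (s - 2) := by
    rw [show s - 1 = 1 + (s - 2) by ring, rpow_add two_pos, rpow_one]
  calc a ^ s = a ^ 2 * a ^ (s - 2) := by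
        rw [← rpow_natCast, ← rpow_add ha₀]; norm_num
    _ ≤ a ^ 2 * (1 / 2) ^ (s - 2) := by gcongr
    _ ≤ 2 * a ^ 2 / s := by
      rw [div_rpow one_pos.le two_pos.le, one_rpow, le_div_iff₀ (by linarith)]
      have hpow : 0 < (2 : ℝ) ^ (s - 2) := by positivity
      field_simp
      nlinarith [sq_nonneg a]

lemma abs_sin_div_le_exp_neg {u : ℝ} (hu₀ : 0 < u) (hu₂ : u ≤ 2) :
    |sin u / u| ≤ exp (-(u ^ 2 / 6)) := by
  have hsin : 0 < sin u := sin_pos_of_pos_of_lt_pi hu₀ (by linarith [pi_gt_three])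
  rw [abs_of_pos (div_pos hsin hu₀), div_le_iff₀ hu₀, mul_comm]
  exact sin_le_mul_exp_neg hu₀.le hu₂

lemma one_sub_sq_div_six_le_sin_div {u : ℝ} (hu : 0 < u) : 1 - u ^ 2 / 6 ≤ sin u / u := by
  rw [le_div_iff₀ hu]
  linarith [sin_ge_sub_cube hu.le]

lemma abs_sin_div_sqrt_rpow_le_exp {s t : ℝ} (hs : 0 < s) (ht : 0 < t) (hts : t ≤ 2 * √s) :
    |sin (t / √s) / (t / √s)| ^ s ≤ exp (-t ^ 2 / 6) := by
  have hs' : 0 < √s := sqrt_pos.mpr hs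
  calc |sin (t / √s) / (t / √s)| ^ s ≤ exp (-((t / √s) ^ 2 / 6)) ^ s := by
        gcongr
        exact abs_sin_div_le_exp_neg (by positivity) (by rw [div_le_iff₀ hs']; linarith)
    _ = exp (-t ^ 2 / 6) := by
        rw [← exp_mul, div_pow, sq_sqrt hs.le]
        field_simp

lemma abs_sin_div_sqrt_rpow_le_two_div_sq {s t : ℝ} (hs : 2 ≤ s) (hts : 2 * √s ≤ t) :
    |sin (t / √s) / (t / √s)| ^ s ≤ 2 / t ^ 2 := by
  have hs' : 0 < √s := sqrt_pos.mpr (by linarith)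
  have ht : 0 < t := by linarith
  have hsin : |sin (t / √s) / (t / √s)| ≤ √s / t := by
    rw [abs_div, abs_of_pos (div_pos ht hs'), div_div_eq_mul_div]
    gcongr
    exact mul_le_of_le_one_left hs'.le (abs_sin_le_one _)
  calc |sin (t / √s) / (t / √s)| ^ s ≤ (√s / t) ^ s := by gcongr
    _ ≤ 2 * (√s / t) ^ 2 / s :=
        rpow_le_two_mul_sq_div (by positivity) (by rw [div_le_iff₀ ht]; linarith) hs
    _ = 2 / t ^ 2 := by
        rw [div_pow, sq_sqrt (by linarith)]
        field_simp

lemma tendsto_abs_sin_div_sqrt_rpow {t : ℝ} (ht : 0 < t) :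
    Tendsto (fun s : ℝ ↦ |sin (t / √s) / (t / √s)| ^ s) atTop (𝓝 (exp (-t ^ 2 / 6))) := by
  refine tendsto_of_tendsto_of_tendsto_of_le_of_le' (tendsto_one_add_div_rpow_exp (-t ^ 2 / 6))
    tendsto_const_nhds ?_ ?_
  · filter_upwards [eventually_ge_atTop (t ^ 2), eventually_gt_atTop 0] with s hts hs
    have hu : (t / √s) ^ 2 = t ^ 2 / s := by rw [div_pow, sq_sqrt hs.le]
    have hbase : 1 + -t ^ 2 / 6 / s = 1 - (t / √s) ^ 2 / 6 := by rw [hu]; ring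
    rw [hbase]
    gcongr
    · rw [hu, sub_nonneg, div_le_one (by norm_num)]
      linarith [div_le_one_of_le₀ hts hs.le]
    · exact (one_sub_sq_div_six_le_sin_div (by positivity)).trans (le_abs_self _)
  · filter_upwards [eventually_ge_atTop (t ^ 2), eventually_gt_atTop 0] with s hts hs
    refine abs_sin_div_sqrt_rpow_le_exp hs ht ?_
    nlinarith [sqrt_le_sqrt hts, sqrt_sq ht.le, sqrt_nonneg s]

lemma exp_neg_sq_div_mul_rpow_eq {c p t : ℝ} :
    exp (-t ^ 2 / c) * t ^ (p - 1) = t ^ (p - 1) * exp (-c⁻¹ * t ^ 2) := by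
  rw [mul_comm, neg_div, neg_mul, inv_mul_eq_div]

lemma integrableOn_exp_neg_sq_div_mul_rpow {c p : ℝ} (hc : 0 < c) (hp : 0 < p) :
    IntegrableOn (fun t : ℝ ↦ exp (-t ^ 2 / c) * t ^ (p - 1)) (Ioi 0) := by
  simp_rw [exp_neg_sq_div_mul_rpow_eq]
  exact integrableOn_rpow_mul_exp_neg_mul_sq (inv_pos.mpr hc) (by linarith)

lemma integral_exp_neg_sq_div_mul_rpow {c p : ℝ} (hc : 0 < c) (hp : 0 < p) :
    ∫ t in Ioi (0 : ℝ), exp (-t ^ 2 / c) * t ^ (p - 1) = c ^ (p / 2) * Gamma (p / 2) / 2 := by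
  have h := integral_rpow_mul_exp_neg_mul_rpow two_pos (by linarith : -1 < p - 1) (inv_pos.mpr hc)
  rw [show (p - 1 + 1) / 2 = p / 2 by ring, show -(p - 1 + 1) / 2 = -(p / 2) by ring,
    inv_rpow hc.le, rpow_neg hc.le, inv_inv] at h
  simp_rw [exp_neg_sq_div_mul_rpow_eq, ← rpow_two, h]
  ring

lemma tendsto_integral_abs_sin_div_sqrt_rpow_mul {p : ℝ} (hp₀ : 0 < p) (hp₂ : p < 2) :
    Tendsto (fun s : ℝ ↦ ∫ t in Ioi (0 : ℝ), |sin (t / √s) / (t / √s)| ^ s * t ^ (p - 1))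
      atTop (𝓝 (∫ t in Ioi (0 : ℝ), exp (-t ^ 2 / 6) * t ^ (p - 1))) := by
  set tail : ℝ → ℝ := (Ioi 1).indicator fun t ↦ 2 / t ^ 2 * t ^ (p - 1)
  have htail_nonneg (t : ℝ) : 0 ≤ tail t :=
    indicator_nonneg (fun t (ht : 1 < t) ↦ by have := ht.le; positivity) t
  have htail_int : IntegrableOn tail (Ioi 0) := by
    refine ((integrable_indicator_iff measurableSet_Ioi).mpr ?_).integrableOn
    refine IntegrableOn.congr_fun
      ((integrableOn_Ioi_rpow_of_lt (by linarith : p - 3 < -1) one_pos).const_mul 2)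
      (fun t (ht : 1 < t) ↦ ?_) measurableSet_Ioi
    rw [← rpow_two, div_mul_eq_mul_div, mul_div_assoc, ← rpow_sub (by linarith)]
    ring_nf
  refine tendsto_integral_filter_of_dominated_convergence
    (fun t ↦ exp (-t ^ 2 / 6) * t ^ (p - 1) + tail t) (Eventually.of_forall fun s ↦ by fun_prop)
    ?_ ((integrableOn_exp_neg_sq_div_mul_rpow (by norm_num) hp₀).add htail_int) ?_
  · filter_upwards [eventually_ge_atTop 2] with s hs
    refine (ae_restrict_iff' measurableSet_Ioi).mpr (Eventually.of_forall fun t (ht : 0 < t) ↦ ?_)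
    rw [norm_of_nonneg (by positivity)]
    rcases le_or_gt t (2 * √s) with hts | hts
    · exact (mul_le_mul_of_nonneg_right (abs_sin_div_sqrt_rpow_le_exp (by linarith) ht hts)
        (by positivity)).trans (le_add_of_nonneg_right (htail_nonneg t))
    · have ht₁ : 1 < t := by linarith [one_le_sqrt.mpr (by linarith : 1 ≤ s)]
      refine le_add_of_nonneg_of_le (by positivity) ?_
      rw [show tail t = _ from indicator_of_mem (mem_Ioi.mpr ht₁) _]
      exact mul_le_mul_of_nonneg_right (abs_sin_div_sqrt_rpow_le_two_div_sq hs hts.le)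
        (by positivity)
  · refine (ae_restrict_iff' measurableSet_Ioi).mpr (Eventually.of_forall fun t ht ↦ ?_)
    exact (tendsto_abs_sin_div_sqrt_rpow ht).mul_const _

theorem psi_tendsto_gaussian {p : ℝ} (hp : p ∈ Set.Ioo (0:ℝ) 1) :
    Tendsto
      (fun s : ℝ =>
        ∫ t in Ioi (0:ℝ),
          |Real.sin (t / Real.sqrt s) / (t / Real.sqrt s)| ^ s * t ^ (p - 1))
      atTop (nhds ((6:ℝ) ^ (p / 2) * Real.Gamma (p / 2) / 2)) ∧
    ∫ t in Ioi (0:ℝ), Real.exp (-t ^ 2 / 6) * t ^ (p - 1)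
      = (6:ℝ) ^ (p / 2) * Real.Gamma (p / 2) / 2 := by
  have hgauss := integral_exp_neg_sq_div_mul_rpow (by norm_num : (0 : ℝ) < 6) hp.1
  exact ⟨hgauss ▸ tendsto_integral_abs_sin_div_sqrt_rpow_mul hp.1 (by linarith [hp.2]), hgauss⟩
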